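/- Let G be a finite simple graph, let x and y be two vertices of G, and let p ≥ 0 be a natural number. Then the number of (x,y)-important sets X ⊆ V(G) with d_G(X) ≤ p is at most 4^p. -/

import Mathlib

open scoped Classical

variable {V : Type*}

/-- The spanning subgraph of `G` whose edges are the *bad* edges w.r.t. the
2-coloring `φ` (edges whose endpoints get the same color). -/
def badGraph (G : SimpleGraph V) (φ : V → Fin 2) : SimpleGraph V where
  Adj u v := G.Adj u v ∧ φ u = φ v
  symm := ⟨fun u v h => ⟨h.1.symm, h.2.symm⟩⟩
  loopless := ⟨fun v h => G.loopless.irrefl v h.1⟩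

/-- The spanning subgraph of `G` whose edges are the *good* edges w.r.t. the
2-coloring `φ` (edges whose endpoints get different colors). -/
def goodGraph (G : SimpleGraph V) (φ : V → Fin 2) : SimpleGraph V where
  Adj u v := G.Adj u v ∧ φ u ≠ φ v
  symm := ⟨fun u v h => ⟨h.1.symm, Ne.symm h.2⟩⟩
  loopless := ⟨fun v h => G.loopless.irrefl v h.1⟩

/-- `X` is a monochromatic component of the 2-coloring `φ` of `G`: the vertex set of a
connected component of the subgraph of `G` induced by one of the two color classes. -/
def IsMonochromaticComponent (G : SimpleGraph V) (φ : V → Fin 2) (X : Set V) : Prop :=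
  ∃ (i : Fin 2) (c : (SimpleGraph.induce (φ ⁻¹' {i}) G).ConnectedComponent),
    X = Subtype.val '' c.supp

/-- `X` is a good component of the 2-coloring `φ` of `G`: the vertex set of a connected
component of the spanning subgraph of `G` consisting of the good edges. -/
def IsGoodComponent (G : SimpleGraph V) (φ : V → Fin 2) (X : Set V) : Prop :=
  ∃ c : (goodGraph G φ).ConnectedComponent, X = c.supp

/-- The cost of a 2-coloring `φ` of `G`: the sum, over all monochromatic components `X`
of `φ`, of `|X| - 1`. -/
noncomputable def cost (G : SimpleGraph V) (φ : V → Fin 2) : ℕ :=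
  ∑ᶠ X ∈ {X : Set V | IsMonochromaticComponent G φ X}, (Nat.card X - 1)

/-- A 2-coloring is a `(T₁,T₂)`-extension if it colors every vertex of `T₁` with the first
color and every vertex of `T₂` with the second color. -/
def IsExtension (φ : V → Fin 2) (T1 T2 : Set V) : Prop :=
  (∀ x ∈ T1, φ x = 0) ∧ (∀ x ∈ T2, φ x = 1)

/-- A cheapest `(T₁,T₂)`-extension of `G`: no `(T₁,T₂)`-extension has strictly smaller cost. -/
noncomputable def IsCheapestExtension (G : SimpleGraph V) (φ : V → Fin 2)
    (T1 T2 : Set V) : Prop :=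
  IsExtension φ T1 T2 ∧ ∀ ψ : V → Fin 2, IsExtension ψ T1 T2 → cost G φ ≤ cost G ψ

/-- `X` is `p`-connected in `G`: `|X| ≥ p` and for all subsets `X₁, X₂ ⊆ X` with
`|X₁| = |X₂| ≤ p` there are `|X₁|` pairwise vertex-disjoint paths in `G`, each with one
endpoint in `X₁` and the other endpoint in `X₂`. -/
def PConnected (G : SimpleGraph V) (p : ℕ) (X : Set V) : Prop :=
  p ≤ Nat.card X ∧
  ∀ X1 X2 : Finset V, ↑X1 ⊆ X → ↑X2 ⊆ X → X1.card = X2.card → X1.card ≤ p →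
    ∃ (a b : Fin X1.card → V) (w : ∀ i, G.Walk (a i) (b i)),
      (∀ i, (w i).IsPath) ∧ (∀ i, a i ∈ X1) ∧ (∀ i, b i ∈ X2) ∧
      ∀ i j, i ≠ j → ∀ x, x ∈ (w i).support → x ∉ (w j).support

/-- `X` is well-connected in `G` if it is `(|X|/2)`-connected. -/
def WellConnected (G : SimpleGraph V) (X : Set V) : Prop :=
  PConnected G (Nat.card X / 2) X

/-- `d_G(X)`: the number of edges of `G` with exactly one endpoint in `X`. -/
noncomputable def cutCard (G : SimpleGraph V) (X : Set V) : ℕ :=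
  Nat.card {e : Sym2 V | e ∈ G.edgeSet ∧ ∃ a b, e = s(a, b) ∧ a ∈ X ∧ b ∉ X}

/-- `X` is an `(x,y)`-important set in `G`. -/
noncomputable def ImportantSet (G : SimpleGraph V) (x y : V) (X : Set V) : Prop :=
  x ∈ X ∧ y ∉ X ∧ (SimpleGraph.induce X G).Connected ∧
  ¬ ∃ X' : Set V, X ⊂ X' ∧ y ∉ X' ∧ (SimpleGraph.induce X' G).Connected ∧
      cutCard G X' ≤ cutCard G X

/-- `G` has a tree decomposition of width at most `w`. -/
def HasTreewidthAtMost (G : SimpleGraph V) (w : ℕ) : Prop :=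
  ∃ (n : ℕ) (T : SimpleGraph (Fin n)) (bag : Fin n → Finset V),
    T.IsTree ∧
    (∀ v : V, ∃ i, v ∈ bag i) ∧
    (∀ u v : V, G.Adj u v → ∃ i, u ∈ bag i ∧ v ∈ bag i) ∧
    (∀ v : V, (SimpleGraph.induce {i | v ∈ bag i} T).Connected) ∧
    (∀ i, (bag i).card ≤ w + 1)

/-- The treewidth of `G`: the minimum width over all tree decompositions of `G`. -/
noncomputable def treewidth (G : SimpleGraph V) : ℕ :=
  sInf {w | HasTreewidthAtMost G w}

/-- The graph `G/S` obtained from `G` by contracting the edges of `S`: its vertices are the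
connected components of the graph `(V(G), S)`, two distinct components being adjacent iff
`G` has an edge with one endpoint in each of them. -/
def contractEdges (G : SimpleGraph V) (S : Set (Sym2 V)) :
    SimpleGraph (SimpleGraph.fromEdgeSet S).ConnectedComponent where
  Adj c d := c ≠ d ∧ ∃ u v : V, G.Adj u v ∧
      (SimpleGraph.fromEdgeSet S).connectedComponentMk u = c ∧
      (SimpleGraph.fromEdgeSet S).connectedComponentMk v = d
  symm := ⟨by
    rintro c d ⟨hcd, u, v, ha, hu, hv⟩
    exact ⟨hcd.symm, v, u, ha.symm, hv, hu⟩⟩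
  loopless := ⟨fun c h => h.1 rfl⟩

/-- The graph `G*` obtained from `G` by adding a new vertex (here `none`) adjacent to
exactly the vertices of `Y`. -/
def addApex (G : SimpleGraph V) (Y : Set V) : SimpleGraph (Option V) :=
  SimpleGraph.fromRel (fun a b =>
    (∃ u v : V, a = some u ∧ b = some v ∧ G.Adj u v) ∨
    (∃ u : V, a = some u ∧ b = none ∧ u ∈ Y))

/-- The set `Z`: the union, over all `x ∈ T`, of all `(x, y*)`-important sets `X` in
`G* = addApex G Y` with `d_{G*}(X) ≤ p`. -/
noncomputable def importantUnion (G : SimpleGraph V) (Y : Set V) (T : Set V) (p : ℕ) :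
    Set (Option V) :=
  {w | ∃ x ∈ T, ∃ X : Set (Option V),
    ImportantSet (addApex G Y) (some x) none X ∧ cutCard (addApex G Y) X ≤ p ∧ w ∈ X}

/-!
For a connected set `S` avoiding `y`, let `λ(S)` be the least `d(Z)` over `Z ⊇ S` avoiding `y`,
and let `X*` be an inclusion-maximal connected such `Z` attaining `λ(S)`. By submodularity of `d`,
every important set containing `S` contains `X*`. If `λ(S) = 0`, `X*` has no outgoing edge, so it
is the only candidate. Otherwise pick an edge `uv` leaving `X*`. An important set `X ⊇ S` either
contains `X* + v`, whose `λ` exceeds `λ(S)` by maximality of `X*`; or it avoids `v`, and then `X`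
stays important in `G - uv` with `d(X)` one smaller, while `λ(X*)` in `G - uv` is at least
`λ(S) - 1`. In both branches `2p - λ` decreases, which bounds the count by `2 ^ (2p - λ) ≤ 4 ^ p`.
-/
open SimpleGraph

section Cuts

variable (G : SimpleGraph V)

def cutSet (X : Set V) : Set (Sym2 V) :=
  {e | e ∈ G.edgeSet ∧ ∃ a b, e = s(a, b) ∧ a ∈ X ∧ b ∉ X}

lemma cutCard_eq_ncard (X : Set V) : cutCard G X = (cutSet G X).ncard :=
  (Nat.card_coe_set_eq _)

variable {G}

lemma mk_mem_cutSet_iff {X : Set V} {u v : V} :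
    s(u, v) ∈ cutSet G X ↔ G.Adj u v ∧ (u ∈ X ∧ v ∉ X ∨ v ∈ X ∧ u ∉ X) := by
  simp only [cutSet, Set.mem_ofPred_eq, mem_edgeSet, Sym2.eq_iff]
  constructor
  · rintro ⟨h, a, b, (⟨rfl, rfl⟩ | ⟨rfl, rfl⟩), ha, hb⟩ <;> tauto
  · rintro ⟨h, ⟨hu, hv⟩ | ⟨hv, hu⟩⟩
    · exact ⟨h, u, v, Or.inl ⟨rfl, rfl⟩, hu, hv⟩
    · exact ⟨h, v, u, Or.inr ⟨rfl, rfl⟩, hv, hu⟩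

lemma cutSet_mono_of_closed {Z Z' : Set V} (hZ' : Z' ⊆ Z)
    (hclosed : ∀ a b, G.Adj a b → a ∈ Z' → b ∈ Z → b ∈ Z') :
    cutSet G Z' ⊆ cutSet G Z := by
  intro e he
  induction e using Sym2.ind with
  | _ u v =>
    rw [mk_mem_cutSet_iff] at he ⊢
    obtain ⟨huv, ⟨hu, hv⟩ | ⟨hv, hu⟩⟩ := he
    · exact ⟨huv, .inl ⟨hZ' hu, fun hvZ => hv (hclosed u v huv hu hvZ)⟩⟩
    · exact ⟨huv, .inr ⟨hZ' hv, fun huZ => hu (hclosed v u huv.symm hv huZ)⟩⟩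

lemma cutSet_deleteEdges (e : Sym2 V) (X : Set V) :
    cutSet (G.deleteEdges {e}) X = cutSet G X \ {e} := by
  ext f
  simp only [cutSet, edgeSet_deleteEdges, Set.mem_ofPred_eq, Set.mem_sdiff]
  tauto

lemma cutCard_le_cutCard_deleteEdges_add_one (e : Sym2 V) (X : Set V) :
    cutCard G X ≤ cutCard (G.deleteEdges {e}) X + 1 := by
  rw [cutCard_eq_ncard, cutCard_eq_ncard, cutSet_deleteEdges, ← Set.ncard_singleton e]
  exact Set.ncard_le_ncard_sdiff_add_ncard _ _

variable [Finite V]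

lemma cutCard_deleteEdges_add_one_of_mem {e : Sym2 V} {X : Set V} (he : e ∈ cutSet G X) :
    cutCard (G.deleteEdges {e}) X + 1 = cutCard G X := by
  rw [cutCard_eq_ncard, cutCard_eq_ncard, cutSet_deleteEdges,
    Set.ncard_sdiff_singleton_add_one he]

lemma cutCard_le_of_closed {Z Z' : Set V} (hZ' : Z' ⊆ Z)
    (hclosed : ∀ a b, G.Adj a b → a ∈ Z' → b ∈ Z → b ∈ Z') :
    cutCard G Z' ≤ cutCard G Z := by
  simp only [cutCard_eq_ncard]
  exact Set.ncard_le_ncard (cutSet_mono_of_closed hZ' hclosed)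

lemma cutCard_union_add_cutCard_inter_le (A B : Set V) :
    cutCard G (A ∪ B) + cutCard G (A ∩ B) ≤ cutCard G A + cutCard G B := by
  have hunion : cutSet G (A ∪ B) ∪ cutSet G (A ∩ B) ⊆ cutSet G A ∪ cutSet G B := by
    intro e he
    induction e using Sym2.ind with
    | _ u v =>
      simp only [Set.mem_union, mk_mem_cutSet_iff, Set.mem_inter_iff] at he ⊢
      tauto
  have hinter : cutSet G (A ∪ B) ∩ cutSet G (A ∩ B) ⊆ cutSet G A ∩ cutSet G B := by
    intro e he
    induction e using Sym2.ind with
    | _ u v =>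
      simp only [Set.mem_union, mk_mem_cutSet_iff, Set.mem_inter_iff] at he ⊢
      tauto
  simp only [cutCard_eq_ncard]
  rw [← Set.ncard_union_add_ncard_inter, ← Set.ncard_union_add_ncard_inter (cutSet G A)]
  exact add_le_add (Set.ncard_le_ncard hunion) (Set.ncard_le_ncard hinter)

end Cuts

section Connectivity

variable {G : SimpleGraph V}

lemma connected_induce_singleton (v : V) : (G.induce {v}).Connected := by
  rw [induce_singleton_eq_top]
  exact connected_top

lemma connected_induce_insert {W : Set V} {u v : V} (hW : (G.induce W).Connected) (hu : u ∈ W)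
    (huv : G.Adj u v) : (G.induce (insert v W)).Connected := by
  rw [← Set.union_singleton]
  exact connected_induce_union hW.preconnected (connected_induce_singleton v).preconnected hu
    rfl huv

lemma induce_deleteEdges_of_notMem {X : Set V} {u v : V} (hv : v ∉ X) :
    (G.deleteEdges {s(u, v)}).induce X = G.induce X := by
  ext a b
  simp only [comap_adj, Function.Embedding.coe_subtype, deleteEdges_adj, Set.mem_singleton_iff,
    Sym2.eq_iff, and_iff_left_iff_imp]
  rintro - (⟨-, rfl⟩ | ⟨rfl, -⟩)
  · exact hv b.2
  · exact hv a.2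

lemma eq_of_subset_of_closed {W X : Set V} (hX : (G.induce X).Connected) (hWX : W ⊆ X)
    (hW : W.Nonempty) (hclosed : ∀ a b, G.Adj a b → a ∈ W → b ∈ X → b ∈ W) : W = X := by
  refine hWX.antisymm fun z hz => ?_
  by_contra hzW
  obtain ⟨w, hw⟩ := hW
  obtain ⟨d, -, hd, hd'⟩ := (hX.preconnected ⟨w, hWX hw⟩ ⟨z, hz⟩).some.exists_boundary_dart
    {a | a.val ∈ W} hw hzW
  exact hd' (hclosed _ _ d.adj hd d.snd.2)

lemma exists_connected_closed_subset [Finite V] {W Z : Set V} (hWZ : W ⊆ Z)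
    (hW : (G.induce W).Connected) :
    ∃ Z', W ⊆ Z' ∧ Z' ⊆ Z ∧ (G.induce Z').Connected ∧
      ∀ a b, G.Adj a b → a ∈ Z' → b ∈ Z → b ∈ Z' := by
  obtain ⟨Z', ⟨hWZ', hZ'Z, hZ'⟩, hmax⟩ :=
    (Set.toFinite {Z' | W ⊆ Z' ∧ Z' ⊆ Z ∧ (G.induce Z').Connected}).exists_maximal
      ⟨W, subset_rfl, hWZ, hW⟩
  refine ⟨Z', hWZ', hZ'Z, hZ', fun a b hab ha hb => ?_⟩
  have hinsert : insert b Z' ⊆ Z' := hmax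
    ⟨hWZ'.trans (Set.subset_insert _ _), Set.insert_subset hb hZ'Z,
      connected_induce_insert hZ' ha hab⟩ (Set.subset_insert _ _)
  exact hinsert (Set.mem_insert b Z')

end Connectivity

section MinCut

variable {G : SimpleGraph V} {x y u v : V} {S X Xs Z : Set V}

noncomputable def minCutCard (G : SimpleGraph V) (y : V) (S : Set V) : ℕ :=
  sInf {n | ∃ Z, S ⊆ Z ∧ y ∉ Z ∧ cutCard G Z = n}

lemma minCutCard_le (hSZ : S ⊆ Z) (hy : y ∉ Z) : minCutCard G y S ≤ cutCard G Z :=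
  Nat.sInf_le ⟨Z, hSZ, hy, rfl⟩

lemma exists_cutCard_eq_minCutCard (hy : y ∉ S) :
    ∃ Z, S ⊆ Z ∧ y ∉ Z ∧ cutCard G Z = minCutCard G y S :=
  Nat.sInf_mem (s := {n | ∃ Z, S ⊆ Z ∧ y ∉ Z ∧ cutCard G Z = n})
    ⟨cutCard G S, S, subset_rfl, hy, rfl⟩

lemma minCutCard_le_minCutCard_deleteEdges_add_one (e : Sym2 V) (hSX : S ⊆ X) (hy : y ∉ X) :
    minCutCard G y S ≤ minCutCard (G.deleteEdges {e}) y X + 1 := by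
  obtain ⟨Z, hXZ, hyZ, hZ⟩ := exists_cutCard_eq_minCutCard (G := G.deleteEdges {e}) hy
  calc minCutCard G y S ≤ cutCard G Z := minCutCard_le (hSX.trans hXZ) hyZ
    _ ≤ cutCard (G.deleteEdges {e}) Z + 1 := cutCard_le_cutCard_deleteEdges_add_one e Z
    _ = minCutCard (G.deleteEdges {e}) y X + 1 := by rw [hZ]

def IsConnectedMinCut (G : SimpleGraph V) (y : V) (S Z : Set V) : Prop :=
  S ⊆ Z ∧ y ∉ Z ∧ (G.induce Z).Connected ∧ cutCard G Z = minCutCard G y S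

variable [Finite V]

lemma exists_maximal_isConnectedMinCut (hS : (G.induce S).Connected) (hy : y ∉ S) :
    ∃ Xs, Maximal (IsConnectedMinCut G y S) Xs := by
  obtain ⟨Z, hSZ, hyZ, hZ⟩ := exists_cutCard_eq_minCutCard (G := G) hy
  obtain ⟨Z', hSZ', hZ'Z, hZ', hclosed⟩ := exists_connected_closed_subset hSZ hS
  have hyZ' : y ∉ Z' := fun h => hyZ (hZ'Z h)
  have hcut : cutCard G Z' = minCutCard G y S :=
    ((cutCard_le_of_closed hZ'Z hclosed).trans hZ.le).antisymm (minCutCard_le hSZ' hyZ')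
  exact (Set.toFinite {Z | IsConnectedMinCut G y S Z}).exists_maximal
    ⟨Z', hSZ', hyZ', hZ', hcut⟩

lemma ImportantSet.superset_of_isConnectedMinCut (hX : ImportantSet G x y X) (hSX : S ⊆ X)
    (hS : S.Nonempty) (hXs : IsConnectedMinCut G y S Xs) : Xs ⊆ X := by
  obtain ⟨-, hyX, hXc, hnot⟩ := hX
  obtain ⟨hSXs, hyXs, hXsc, hXscut⟩ := hXs
  by_contra hXsX
  have hSinter : S ⊆ X ∩ Xs := Set.subset_inter hSX hSXs
  have hunion := cutCard_union_add_cutCard_inter_le (G := G) X Xs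
  have hinter := minCutCard_le (G := G) hSinter fun h => hyX h.1
  exact hnot ⟨X ∪ Xs, Set.ssubset_union_left_iff.2 hXsX, fun h => h.elim hyX hyXs,
    induce_union_connected hXc.preconnected hXsc.preconnected (hS.mono hSinter), by omega⟩

lemma minCutCard_lt_minCutCard_insert (hXs : Maximal (IsConnectedMinCut G y S) Xs)
    (hu : u ∈ Xs) (hv : v ∉ Xs) (huv : G.Adj u v) (hvy : v ≠ y) :
    minCutCard G y S < minCutCard G y (insert v Xs) := by
  obtain ⟨⟨hSXs, hyXs, hXsc, -⟩, hmax⟩ := hXs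
  by_contra! hle
  have hy : y ∉ insert v Xs := by simp [hvy.symm, hyXs]
  obtain ⟨Z, hvXsZ, hyZ, hZ⟩ := exists_cutCard_eq_minCutCard (G := G) hy
  obtain ⟨Z', hXsZ', hZ'Z, hZ', hclosed⟩ :=
    exists_connected_closed_subset ((Set.subset_insert _ _).trans hvXsZ) hXsc
  have hyZ' : y ∉ Z' := fun h => hyZ (hZ'Z h)
  have hcut : cutCard G Z' = minCutCard G y S :=
    ((cutCard_le_of_closed hZ'Z hclosed).trans (hZ.trans_le hle)).antisymm
      (minCutCard_le (hSXs.trans hXsZ') hyZ')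
  have hvZ' : v ∈ Z' := hclosed u v huv (hXsZ' hu) (hvXsZ (Set.mem_insert v Xs))
  exact hv (hmax ⟨hSXs.trans hXsZ', hyZ', hZ', hcut⟩ hXsZ' hvZ')

lemma ImportantSet.deleteEdges (hX : ImportantSet G x y X) (hu : u ∈ X) (hv : v ∉ X)
    (huv : G.Adj u v) : ImportantSet (G.deleteEdges {s(u, v)}) x y X := by
  obtain ⟨hx, hy, hXc, hnot⟩ := hX
  have hXcut := cutCard_deleteEdges_add_one_of_mem (mk_mem_cutSet_iff.2 ⟨huv, .inl ⟨hu, hv⟩⟩)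
  refine ⟨hx, hy, (induce_deleteEdges_of_notMem hv).symm ▸ hXc, ?_⟩
  rintro ⟨X', hXX', hyX', hX'c, hcut⟩
  have hX'cut := cutCard_le_cutCard_deleteEdges_add_one (G := G) s(u, v) X'
  exact hnot ⟨X', hXX', hyX', hX'c.mono (comap_monotone _ (deleteEdges_le _)), by omega⟩

end MinCut

section Counting

variable {G : SimpleGraph V} {x y u v : V} {S Xs : Set V} {p : ℕ}

def importantSetsContaining (G : SimpleGraph V) (x y : V) (S : Set V) (p : ℕ) : Set (Set V) :=
  {X | ImportantSet G x y X ∧ S ⊆ X ∧ cutCard G X ≤ p}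

lemma importantSetsContaining_singleton :
    importantSetsContaining G x y {x} p = {X | ImportantSet G x y X ∧ cutCard G X ≤ p} := by
  ext X
  simp only [importantSetsContaining, Set.singleton_subset_iff, Set.mem_ofPred_eq]
  exact ⟨fun ⟨hX, _, hp⟩ => ⟨hX, hp⟩, fun ⟨hX, hp⟩ => ⟨hX, hX.1, hp⟩⟩

lemma importantSetsContaining_eq_empty_of_mem (hy : y ∈ S) :
    importantSetsContaining G x y S p = ∅ :=
  Set.eq_empty_of_forall_notMem fun _ ⟨hX, hSX, _⟩ => hX.2.1 (hSX hy)

lemma importantSetsContaining_eq_empty_of_lt (h : p < minCutCard G y S) :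
    importantSetsContaining G x y S p = ∅ :=
  Set.eq_empty_of_forall_notMem fun _ ⟨hX, hSX, hp⟩ =>
    ((minCutCard_le hSX hX.2.1).trans hp).not_gt h

variable [Finite V]

lemma importantSetsContaining_subsingleton (hS : (G.induce S).Connected) (hy : y ∉ S)
    (h0 : minCutCard G y S = 0) : (importantSetsContaining G x y S p).Subsingleton := by
  obtain ⟨Xs, hXs⟩ := exists_maximal_isConnectedMinCut hS hy
  have hSne : S.Nonempty := Set.nonempty_coe_sort.mp hS.nonempty
  have hclosed : ∀ a b, G.Adj a b → a ∈ Xs → b ∈ Xs := by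
    intro a b hab ha
    by_contra hb
    have hcut : cutSet G Xs = ∅ := by
      rw [← Set.ncard_eq_zero, ← cutCard_eq_ncard, hXs.prop.2.2.2, h0]
    exact hcut.subset (mk_mem_cutSet_iff.2 ⟨hab, .inl ⟨ha, hb⟩⟩)
  have heq : ∀ X ∈ importantSetsContaining G x y S p, Xs = X := fun X ⟨hX, hSX, _⟩ =>
    eq_of_subset_of_closed hX.2.2.1 (hX.superset_of_isConnectedMinCut hSX hSne hXs.prop)
      (hSne.mono hXs.prop.1) fun a b hab ha _ => hclosed a b hab ha
  exact fun X hX X' hX' => (heq X hX).symm.trans (heq X' hX')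

lemma importantSetsContaining_subset_union (hS : S.Nonempty)
    (hXs : IsConnectedMinCut G y S Xs) (hu : u ∈ Xs) (huv : G.Adj u v) :
    importantSetsContaining G x y S p ⊆ importantSetsContaining G x y (insert v Xs) p ∪
      importantSetsContaining (G.deleteEdges {s(u, v)}) x y Xs (p - 1) := by
  rintro X ⟨hX, hSX, hp⟩
  have hXsX := hX.superset_of_isConnectedMinCut hSX hS hXs
  by_cases hvX : v ∈ X
  · exact .inl ⟨hX, Set.insert_subset hvX hXsX, hp⟩
  · have he : s(u, v) ∈ cutSet G X := mk_mem_cutSet_iff.2 ⟨huv, .inl ⟨hXsX hu, hvX⟩⟩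
    have := cutCard_deleteEdges_add_one_of_mem he
    exact .inr ⟨hX.deleteEdges (hXsX hu) hvX huv, hXsX, by omega⟩

lemma ncard_importantSetsContaining_le_one (hS : (G.induce S).Connected) (hy : y ∉ S)
    (h : p < minCutCard G y S ∨ minCutCard G y S = 0) :
    (importantSetsContaining G x y S p).ncard ≤ 1 := by
  rcases h with hlt | h0
  · simp [importantSetsContaining_eq_empty_of_lt hlt]
  · exact Set.ncard_le_one_iff_subsingleton.2 (importantSetsContaining_subsingleton hS hy h0)

theorem ncard_importantSetsContaining_le (m : ℕ) (hS : (G.induce S).Connected) (hy : y ∉ S)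
    (hm : 2 * p ≤ m + minCutCard G y S) :
    (importantSetsContaining G x y S p).ncard ≤ 2 ^ m := by
  induction m generalizing G S p with
  | zero => exact ncard_importantSetsContaining_le_one hS hy (by omega)
  | succ m ih =>
    by_cases hbase : p < minCutCard G y S ∨ minCutCard G y S = 0
    · exact (ncard_importantSetsContaining_le_one hS hy hbase).trans Nat.one_le_two_pow
    obtain ⟨Xs, hXs⟩ := exists_maximal_isConnectedMinCut hS hy
    obtain ⟨hSXs, hyXs, hXsc, hXscut⟩ := hXs.prop
    obtain ⟨_, huv, u, v, rfl, hu, hv⟩ : (cutSet G Xs).Nonempty := by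
      rw [← Set.ncard_pos, ← cutCard_eq_ncard]
      omega
    rw [mem_edgeSet] at huv
    have hbranch := importantSetsContaining_subset_union (x := x) (p := p)
      (Set.nonempty_coe_sort.mp hS.nonempty) hXs.prop hu huv
    have hinsert : (importantSetsContaining G x y (insert v Xs) p).ncard ≤ 2 ^ m := by
      by_cases hvy : v = y
      · subst hvy
        simp [importantSetsContaining_eq_empty_of_mem (x := x) (p := p) (Set.mem_insert v Xs)]
      have := minCutCard_lt_minCutCard_insert hXs hu hv huv hvy
      exact ih (p := p) (connected_induce_insert hXsc hu huv) (by simp [hyXs, Ne.symm hvy])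
        (by omega)
    have hdelete :
        (importantSetsContaining (G.deleteEdges {s(u, v)}) x y Xs (p - 1)).ncard ≤ 2 ^ m := by
      have := minCutCard_le_minCutCard_deleteEdges_add_one (G := G) s(u, v) hSXs hyXs
      exact ih (p := p - 1) ((induce_deleteEdges_of_notMem hv).symm ▸ hXsc) hyXs (by omega)
    calc (importantSetsContaining G x y S p).ncard
        ≤ (importantSetsContaining G x y (insert v Xs) p ∪
            importantSetsContaining (G.deleteEdges {s(u, v)}) x y Xs (p - 1)).ncard :=
          Set.ncard_le_ncard hbranch
      _ ≤ 2 ^ m + 2 ^ m := (Set.ncard_union_le _ _).trans (add_le_add hinsert hdelete)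
      _ = 2 ^ (m + 1) := by ring

end Counting

/-- for vertices `x`, `y` of `G` and `p ≥ 0`, the number of `(x,y)`-important
sets `X` with `d_G(X) ≤ p` is at most `4^p`. -/
theorem stmt11 {V : Type*} [Fintype V] (G : SimpleGraph V) (x y : V) (p : ℕ) :
    Nat.card {X : Set V | ImportantSet G x y X ∧ cutCard G X ≤ p} ≤ 4 ^ p := by
  rw [Nat.card_coe_set_eq, ← importantSetsContaining_singleton]
  by_cases hxy : x = y
  · rw [importantSetsContaining_eq_empty_of_mem (hxy ▸ Set.mem_singleton x), Set.ncard_empty]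
    exact Nat.zero_le _
  calc (importantSetsContaining G x y {x} p).ncard ≤ 2 ^ (2 * p) :=
        ncard_importantSetsContaining_le (2 * p) (connected_induce_singleton x) (Ne.symm hxy)
          (Nat.le_add_right _ _)
    _ = 4 ^ p := by rw [pow_mul]; norm_num
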